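/- arXiv:math/0703401 — 7 statements merged into one kernel-verified Lean document; each statement's English description precedes it below -/
import Mathlib

section
/- Let σ : E → B be a representation of the semilattice E in a Boolean algebra B. Assume that either (i) there exists a finite subset X ⊆ E with ⨆_{x∈X} σ x = ⊤, or (ii) E admits no finite cover (of E itself). Then σ is tight if and only if for every x ∈ E with x ≠ 0 and every finite cover Z of the interval [0, x] = {z ∈ E : z ≤ x}, one has σ x ≤ ⨆_{z∈Z} σ z. -/
variable {E B : Type*} [SemilatticeInf E] [OrderBot E] [BooleanAlgebra B]

/-- A representation of the semilattice `E` in the Boolean algebra `B`. -/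
def IsRepresentation (σ : E → B) : Prop :=
  σ ⊥ = ⊥ ∧ ∀ x y : E, σ (x ⊓ y) = σ x ⊓ σ y

/-- The set `E^{X,Y}` for finite subsets `X, Y ⊆ E`. -/
def eSet (X Y : Finset E) : Set E :=
  {z | (∀ x ∈ X, z ≤ x) ∧ ∀ y ∈ Y, z ⊓ y = ⊥}

/-- `Z` is a cover for `F`. -/
def IsCover (Z F : Set E) : Prop :=
  Z ⊆ F ∧ ∀ x ∈ F, x ≠ ⊥ → ∃ z ∈ Z, z ⊓ x ≠ ⊥

/-- Tightness of a representation. -/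
def IsTight (σ : E → B) : Prop :=
  ∀ X Y Z : Finset E, IsCover (↑Z) (eSet X Y) →
    (X.inf σ ⊓ Y.inf fun y => (σ y)ᶜ) ≤ Z.sup σ

/-!
Tightness reduces to covers of the intervals `[0, x]`. For `X ≠ ∅` put `x = ⨅ X`, so that
`E^{X,Y} = E^{{x},Y}`. If `Z` covers `E^{{x},Y}`, then `Z ∪ Y` meets every nonzero element of
`[0, x]`, since an element disjoint from all of `Y` lies in `E^{{x},Y}`; hence `x ⊓ (Z ∪ Y)` covers
`[0, x]`, giving `σ x ≤ ⨆_Z σ ⊔ ⨆_Y σ`, which is the tightness inequality after meeting with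
`⨅_Y (σ y)ᶜ`. For `X = ∅` the same argument shows that `Z ∪ Y` covers `E`, which is impossible
under (ii); under (i) one writes `⊤ = ⨆_{a ∈ X₀} σ a` and applies the interval case to each `a`.
-/

def MeetsNonzero (Z F : Set E) : Prop :=
  ∀ x ∈ F, x ≠ ⊥ → ∃ z ∈ Z, z ⊓ x ≠ ⊥

def IsTightOnIic (σ : E → B) : Prop :=
  ∀ x : E, x ≠ ⊥ → ∀ Z : Finset E, IsCover (↑Z) (Set.Iic x) → σ x ≤ Z.sup σ

theorem IsCover.meetsNonzero {Z F : Set E} (h : IsCover Z F) : MeetsNonzero Z F := h.2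

theorem MeetsNonzero.mono {Z F G : Set E} (h : MeetsNonzero Z F) (hGF : G ⊆ F) :
    MeetsNonzero Z G :=
  fun x hx => h x (hGF hx)

theorem eSet_singleton_empty (x : E) : eSet {x} ∅ = Set.Iic x := by
  ext z; simp [eSet]

theorem eSet_empty_empty : eSet (∅ : Finset E) ∅ = Set.univ := by
  ext z; simp [eSet]

theorem eSet_anti_left {X X' : Finset E} (hXX' : X ⊆ X') (Y : Finset E) :
    eSet X' Y ⊆ eSet X Y :=
  fun _ hz => ⟨fun x hx => hz.1 x (hXX' hx), hz.2⟩

theorem eSet_eq_eSet_singleton_inf' {X : Finset E} (hX : X.Nonempty) (Y : Finset E) :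
    eSet X Y = eSet {X.inf' hX id} Y := by
  ext z; simp [eSet, Finset.le_inf'_iff]

theorem MeetsNonzero.union_eSet [DecidableEq E] {X Y Z : Finset E}
    (hZ : MeetsNonzero ↑Z (eSet X Y)) : MeetsNonzero ↑(Z ∪ Y) (eSet X ∅) := by
  intro w hw hw0
  by_cases hY : ∀ y ∈ Y, w ⊓ y = ⊥
  · obtain ⟨z, hz, hzw⟩ := hZ w ⟨fun x hx => hw.1 x hx, hY⟩ hw0
    exact ⟨z, by simp_all, hzw⟩
  · push Not at hY
    obtain ⟨y, hy, hwy⟩ := hY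
    exact ⟨y, by simp [hy], by rwa [inf_comm]⟩

theorem MeetsNonzero.isCover_image_inf [DecidableEq E] {x : E} {Z : Finset E}
    (hZ : MeetsNonzero ↑Z (Set.Iic x)) : IsCover ↑(Z.image (x ⊓ ·)) (Set.Iic x) := by
  refine ⟨by simp [Set.subset_def], fun w hw hw0 => ?_⟩
  obtain ⟨z, hz, hzw⟩ := hZ w hw hw0
  refine ⟨x ⊓ z, by simp only [Finset.coe_image]; exact Set.mem_image_of_mem _ hz, ?_⟩
  rwa [inf_right_comm, inf_eq_right.mpr hw, inf_comm]

theorem IsTight.isTightOnIic {σ : E → B} (hσ : IsTight σ) : IsTightOnIic σ := by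
  intro x _ Z hZ
  simpa using hσ {x} ∅ Z (by rwa [eSet_singleton_empty])

namespace IsRepresentation

variable {σ : E → B}

theorem map_inf' (hσ : IsRepresentation σ) {X : Finset E} (hX : X.Nonempty) :
    σ (X.inf' hX id) = X.inf σ := by
  rw [Finset.apply_inf'_eq_inf'_comp hX σ hσ.2, Finset.inf'_eq_inf]
  rfl

theorem inf_compl_le_sup_of_meetsNonzero (hσ : IsRepresentation σ) (hIic : IsTightOnIic σ)
    {x : E} {Y Z : Finset E} (hZ : MeetsNonzero ↑Z (eSet {x} Y)) :
    σ x ⊓ Y.inf (fun y => (σ y)ᶜ) ≤ Z.sup σ := by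
  classical
  rcases eq_or_ne x ⊥ with rfl | hx
  · simp [hσ.1]
  have hcover : IsCover ↑((Z ∪ Y).image (x ⊓ ·)) (Set.Iic x) := by
    have := hZ.union_eSet
    rw [eSet_singleton_empty] at this
    exact this.isCover_image_inf
  have hle : σ x ≤ Z.sup σ ⊔ Y.sup σ := by
    calc σ x ≤ ((Z ∪ Y).image (x ⊓ ·)).sup σ := hIic x hx _ hcover
      _ ≤ (Z ∪ Y).sup σ := by
        rw [Finset.sup_image]
        exact Finset.sup_mono_fun fun a _ => by simp [Function.comp, hσ.2]
      _ = Z.sup σ ⊔ Y.sup σ := Finset.sup_union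
  calc σ x ⊓ Y.inf (fun y => (σ y)ᶜ) ≤ (Z.sup σ ⊔ Y.sup σ) ⊓ (Y.sup σ)ᶜ := by
        rw [Finset.compl_sup]; exact inf_le_inf_right _ hle
    _ ≤ Z.sup σ := by
        rw [inf_sup_right, inf_compl_self, sup_bot_eq]; exact inf_le_left

end IsRepresentation

theorem tight_iff_of_alt (σ : E → B) (hσ : IsRepresentation σ)
    (h : (∃ X : Finset E, X.sup σ = ⊤) ∨ ¬∃ Z : Finset E, IsCover (↑Z) (Set.univ : Set E)) :
    IsTight σ ↔
      ∀ x : E, x ≠ ⊥ → ∀ Z : Finset E, IsCover (↑Z) {z : E | z ≤ x} → σ x ≤ Z.sup σ := by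
  classical
  refine ⟨IsTight.isTightOnIic, fun hIic X Y Z hZ => ?_⟩
  rcases X.eq_empty_or_nonempty with rfl | hX
  · rcases h with ⟨X₀, hX₀⟩ | hnc
    · rw [Finset.inf_empty, ← hX₀, Finset.sup_inf_distrib_right]
      exact Finset.sup_le fun a _ => hσ.inf_compl_le_sup_of_meetsNonzero hIic
        (hZ.meetsNonzero.mono (eSet_anti_left (Finset.empty_subset _) Y))
    · refine (hnc ⟨Z ∪ Y, Set.subset_univ _, ?_⟩).elim
      rw [← eSet_empty_empty]
      exact hZ.meetsNonzero.union_eSet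
  · rw [eSet_eq_eSet_singleton_inf' hX] at hZ
    rw [← hσ.map_inf' hX]
    exact hσ.inf_compl_le_sup_of_meetsNonzero hIic hZ.meetsNonzero
end

section
/- If y ≤ x are elements of the semilattice E such that y is dense in x, then σ y = σ x for every tight representation σ of E in any Boolean algebra B. -/
variable {E B : Type*} [SemilatticeInf E] [OrderBot E] [BooleanAlgebra B]

theorem tight_eq_of_dense (σ : E → B) (hσ : IsRepresentation σ) (ht : IsTight σ)
    (x y : E) (hyx : y ≤ x) (hdense : ∀ z : E, z ≤ x → z ⊓ y = ⊥ → z = ⊥) :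
    σ y = σ x := by
  have hcov : IsCover (↑(∅ : Finset E)) (eSet {x} {y}) := by
    constructor
    · simp
    · intro z hz hz0
      exact absurd (hdense z (hz.1 x (by simp)) (hz.2 y (by simp))) hz0
  have h := ht {x} {y} ∅ hcov
  simp only [Finset.inf_singleton, Finset.sup_empty] at h
  have hxy : σ x ≤ σ y := sdiff_eq_bot_iff.mp (by rw [sdiff_eq]; exact le_bot_iff.mp h)
  have hyx' : σ y ≤ σ x := by
    have : σ (y ⊓ x) = σ y ⊓ σ x := hσ.2 y x
    rw [inf_eq_left.mpr hyx] at this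
    exact this.le.trans inf_le_right
  exact le_antisymm hyx' hxy
end

section
/- Suppose E carries a Boolean algebra structure whose induced order is the semilattice order of E (so E is a BooleanAlgebra, viewed as a meet-semilattice with least element ⊥), and let σ : E → B be a representation of E in a Boolean algebra B. Then σ is tight if and only if σ is a homomorphism of Boolean algebras (it preserves ⊥, ⊤, ⊓, ⊔ and complements). -/
variable {E B : Type*} [SemilatticeInf E] [OrderBot E] [BooleanAlgebra B]

private lemma compl_sup_finset {α β : Type*} [BooleanAlgebra β] (S : Finset α) (f : α → β) :
    (S.sup f)ᶜ = S.inf fun y => (f y)ᶜ := by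
  induction S using Finset.cons_induction with
  | empty => simp
  | cons a s ha ih => simp [Finset.sup_cons, Finset.inf_cons, compl_sup, ih]

theorem tight_iff_boolean_hom {E B : Type*} [BooleanAlgebra E] [BooleanAlgebra B]
    (σ : E → B) (hσ : IsRepresentation σ) :
    IsTight σ ↔
      (σ ⊥ = ⊥ ∧ σ ⊤ = ⊤ ∧ (∀ x y : E, σ (x ⊓ y) = σ x ⊓ σ y) ∧
        (∀ x y : E, σ (x ⊔ y) = σ x ⊔ σ y) ∧ ∀ x : E, σ xᶜ = (σ x)ᶜ) := by
  obtain ⟨hbot, hinf⟩ := hσ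
  have hmono : Monotone σ := by
    intro a b hab
    have : σ (a ⊓ b) = σ a := by rw [inf_eq_left.mpr hab]
    rw [hinf] at this
    exact le_of_eq (this.symm) |>.trans inf_le_right
  constructor
  · intro ht
    have htop : σ ⊤ = ⊤ := by
      have hc : IsCover (↑({⊤} : Finset E)) (eSet (∅ : Finset E) ∅) := by
        constructor
        · intro z hz
          simp only [Finset.coe_singleton, Set.mem_singleton_iff] at hz
          subst hz
          simp [eSet]
        · intro x _ hx
          exact ⟨⊤, by simp, by simpa using hx⟩
      have := ht ∅ ∅ {⊤} hc
      simpa using this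
    have hcompl : ∀ x : E, σ xᶜ = (σ x)ᶜ := by
      intro x
      have h1 : σ xᶜ ≤ (σ x)ᶜ := by
        rw [le_compl_iff_disjoint_right, disjoint_iff]
        rw [← hinf]
        simp [hbot]
      have h2 : (σ x)ᶜ ≤ σ xᶜ := by
        have hc : IsCover (↑({xᶜ} : Finset E)) (eSet (∅ : Finset E) {x}) := by
          constructor
          · intro z hz
            simp only [Finset.coe_singleton, Set.mem_singleton_iff] at hz
            subst hz
            refine ⟨by simp, ?_⟩
            intro y hy
            simp only [Finset.mem_singleton] at hy
            subst hy
            simp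
          · intro z hz hzne
            refine ⟨xᶜ, by simp, ?_⟩
            obtain ⟨-, hz2⟩ := hz
            have hzx : z ⊓ x = ⊥ := hz2 x (by simp)
            have : z ≤ xᶜ := by
              rw [le_compl_iff_disjoint_right, disjoint_iff]
              exact hzx
            rwa [inf_eq_right.mpr this]
        have := ht ∅ {x} {xᶜ} hc
        simpa using this
      exact le_antisymm h1 h2
    refine ⟨hbot, htop, hinf, ?_, hcompl⟩
    intro x y
    have : x ⊔ y = (xᶜ ⊓ yᶜ)ᶜ := by simp
    rw [this, hcompl, hinf, hcompl, hcompl, compl_inf, compl_compl, compl_compl]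
  · rintro ⟨-, htop, -, hsup, hcompl⟩
    have hsinf : ∀ (S : Finset E), σ (S.inf id) = S.inf σ := by
      intro S
      induction S using Finset.cons_induction with
      | empty => simpa using htop
      | cons a s ha ih => simp [Finset.inf_cons, hinf, ih]
    have hssup : ∀ (S : Finset E), σ (S.sup id) = S.sup σ := by
      intro S
      induction S using Finset.cons_induction with
      | empty => simpa using hbot
      | cons a s ha ih => simp [Finset.sup_cons, hsup, ih]
    intro X Y Z hc
    obtain ⟨hZsub, hZcov⟩ := hc
    set a : E := X.inf id ⊓ (Y.sup id)ᶜ with ha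
    have hmem : ∀ z : E, z ∈ eSet X Y ↔ z ≤ a := by
      intro z
      constructor
      · rintro ⟨h1, h2⟩
        refine le_inf (Finset.le_inf fun x hx => h1 x hx) ?_
        rw [le_compl_iff_disjoint_right, disjoint_iff, inf_comm,
          Finset.sup_inf_distrib_right]
        refine (Finset.sup_eq_bot_iff _ _).mpr fun y hy => ?_
        rw [inf_comm]
        exact h2 y hy
      · intro h
        constructor
        · intro x hx
          exact h.trans (inf_le_left.trans (Finset.inf_le hx))
        · intro y hy
          have hya : a ⊓ y = ⊥ := by
            rw [← le_bot_iff]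
            calc a ⊓ y ≤ (Y.sup id)ᶜ ⊓ Y.sup id :=
                  inf_le_inf inf_le_right (Finset.le_sup (f := id) hy)
              _ = ⊥ := compl_inf_eq_bot
          rw [← le_bot_iff, ← hya]
          exact inf_le_inf_right y h
    have hab : a ≤ Z.sup id := by
      have hb : a ⊓ (Z.sup id)ᶜ = ⊥ := by
        by_contra hb
        obtain ⟨z, hz, hzb⟩ := hZcov (a ⊓ (Z.sup id)ᶜ) ((hmem _).mpr inf_le_left) hb
        apply hzb
        rw [← le_bot_iff]
        calc z ⊓ (a ⊓ (Z.sup id)ᶜ) ≤ Z.sup id ⊓ (Z.sup id)ᶜ :=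
              inf_le_inf (Finset.le_sup (f := id) (by simpa using hz)) inf_le_right
          _ = ⊥ := inf_compl_eq_bot
      rwa [← sdiff_eq, sdiff_eq_bot_iff] at hb
    calc (X.inf σ ⊓ Y.inf fun y => (σ y)ᶜ)
        = σ (X.inf id) ⊓ (σ (Y.sup id))ᶜ := by rw [hsinf, hssup, compl_sup_finset]
      _ = σ a := by rw [← hcompl, ← hinf]
      _ ≤ σ (Z.sup id) := hmono hab
      _ = Z.sup σ := hssup Z
end

section
/- If ξ is an ultrafilter in the semilattice E, then the character φ_ξ : E → Bool, defined by φ_ξ x = true iff x ∈ ξ, is a tight representation of E in the Boolean algebra Bool. -/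
variable {E B : Type*} [SemilatticeInf E] [OrderBot E] [BooleanAlgebra B]

/-- A filter in the semilattice `E`. -/
def IsFilterE (ξ : Set E) : Prop :=
  ξ.Nonempty ∧ ⊥ ∉ ξ ∧ (∀ x ∈ ξ, ∀ y : E, x ≤ y → y ∈ ξ) ∧
    ∀ x ∈ ξ, ∀ y ∈ ξ, x ⊓ y ∈ ξ

/-- An ultrafilter in the semilattice `E`. -/
def IsUltraE (ξ : Set E) : Prop :=
  IsFilterE ξ ∧ ∀ η : Set E, IsFilterE η → ξ ⊆ η → η = ξ

/-- In a filter, a finite subset has a common lower bound in the filter. -/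
lemma filter_lb {ξ : Set E} (hξ : IsFilterE ξ) (X : Finset E) (hX : ∀ x ∈ X, x ∈ ξ) :
    ∃ w ∈ ξ, ∀ x ∈ X, w ≤ x := by
  classical
  induction X using Finset.induction_on with
  | empty => obtain ⟨u, hu⟩ := hξ.1; exact ⟨u, hu, by simp⟩
  | @insert a S ha ih =>
    obtain ⟨w, hw, hw2⟩ := ih fun x hx => hX x (Finset.mem_insert_of_mem hx)
    refine ⟨w ⊓ a, hξ.2.2.2 w hw a (hX a (Finset.mem_insert_self a S)), ?_⟩
    intro x hx
    rcases Finset.mem_insert.1 hx with rfl | hx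
    · exact inf_le_right
    · exact inf_le_left.trans (hw2 x hx)

/-- Combine elements of the filter disjoint from each element of a finite set. -/
lemma filter_disj {ξ : Set E} (hξ : IsFilterE ξ) (S : Finset E)
    (hS : ∀ s ∈ S, ∃ e ∈ ξ, e ⊓ s = ⊥) :
    ∃ w ∈ ξ, ∀ s ∈ S, w ⊓ s = ⊥ := by
  classical
  induction S using Finset.induction_on with
  | empty => obtain ⟨u, hu⟩ := hξ.1; exact ⟨u, hu, by simp⟩
  | @insert a S ha ih =>
    obtain ⟨w, hw, hw2⟩ := ih fun s hs => hS s (Finset.mem_insert_of_mem hs)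
    obtain ⟨e, he, he2⟩ := hS a (Finset.mem_insert_self a S)
    refine ⟨w ⊓ e, hξ.2.2.2 w hw e he, ?_⟩
    intro s hs
    rcases Finset.mem_insert.1 hs with rfl | hs
    · exact le_bot_iff.1 (le_trans (inf_le_inf_right s inf_le_right) he2.le)
    · exact le_bot_iff.1 (le_trans (inf_le_inf_right s inf_le_left) (hw2 s hs).le)

/-- The ultrafilter dichotomy: any element not in the ultrafilter is disjoint from some
element of the ultrafilter. -/
lemma ultra_dichotomy {ξ : Set E} (hξ : IsUltraE ξ) {a : E} (ha : a ∉ ξ) :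
    ∃ e ∈ ξ, e ⊓ a = ⊥ := by
  by_contra h
  push_neg at h
  set η : Set E := {y | ∃ e ∈ ξ, e ⊓ a ≤ y} with hη
  obtain ⟨u, hu⟩ := hξ.1.1
  have hfil : IsFilterE η := by
    refine ⟨⟨a, u, hu, inf_le_right⟩, ?_, ?_, ?_⟩
    · rintro ⟨e, he, hle⟩
      exact h e he (le_bot_iff.1 hle)
    · rintro x ⟨e, he, hle⟩ y hxy
      exact ⟨e, he, hle.trans hxy⟩
    · rintro x ⟨e₁, he₁, h₁⟩ y ⟨e₂, he₂, h₂⟩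
      refine ⟨e₁ ⊓ e₂, hξ.1.2.2.2 e₁ he₁ e₂ he₂, le_inf ?_ ?_⟩
      · exact le_trans (inf_le_inf_right a inf_le_left) h₁
      · exact le_trans (inf_le_inf_right a inf_le_right) h₂
  have hsub : ξ ⊆ η := fun e he => ⟨e, he, inf_le_left⟩
  have : η = ξ := hξ.2 η hfil hsub
  exact ha (this ▸ ⟨u, hu, inf_le_right⟩)

theorem ultrafilter_character_tight (ξ : Set E) (hξ : IsUltraE ξ)
    (φ : E → Bool) (hφ : ∀ x : E, φ x = true ↔ x ∈ ξ) :
    IsRepresentation φ ∧ IsTight φ := by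
  classical
  have hfil := hξ.1
  constructor
  · constructor
    · have : (⊥ : Bool) = false := rfl
      rw [this, ← Bool.not_eq_true, hφ]
      exact hfil.2.1
    · intro x y
      have key : φ (x ⊓ y) = true ↔ (φ x = true ∧ φ y = true) := by
        rw [hφ, hφ, hφ]
        constructor
        · intro h
          exact ⟨hfil.2.2.1 _ h x inf_le_left, hfil.2.2.1 _ h y inf_le_right⟩
        · rintro ⟨h1, h2⟩
          exact hfil.2.2.2 x h1 y h2
      rcases hx : φ x <;> rcases hy : φ y <;> rcases hxy : φ (x ⊓ y) <;> simp_all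
  · intro X Y Z hcov
    by_contra hle
    -- In Bool, failure of ≤ means LHS = true and RHS = false
    have hLHS : (X.inf φ ⊓ Y.inf fun y => (φ y)ᶜ) = true := by
      rcases h : (X.inf φ ⊓ Y.inf fun y => (φ y)ᶜ) with _ | _
      · exact absurd (h ▸ bot_le) hle
      · rfl
    have hRHS : Z.sup φ = false := by
      rcases h : Z.sup φ with _ | _
      · rfl
      · exact absurd (h ▸ le_top) hle
    have hX : ∀ x ∈ X, x ∈ ξ := by
      intro x hx
      have : X.inf φ = true := by
        have := inf_le_left (a := X.inf φ) (b := Y.inf fun y => (φ y)ᶜ)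
        rw [hLHS] at this
        exact top_le_iff.1 this |>.symm ▸ rfl
      have hxle : X.inf φ ≤ φ x := Finset.inf_le hx
      rw [this] at hxle
      exact (hφ x).1 (top_le_iff.1 hxle)
    have hY : ∀ y ∈ Y, y ∉ ξ := by
      intro y hy hmem
      have hYinf : (Y.inf fun y => (φ y)ᶜ) = true := by
        have := inf_le_right (a := X.inf φ) (b := Y.inf fun y => (φ y)ᶜ)
        rw [hLHS] at this
        exact top_le_iff.1 this
      have hyle : (Y.inf fun y => (φ y)ᶜ) ≤ (φ y)ᶜ := Finset.inf_le hy
      rw [hYinf] at hyle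
      have : (φ y)ᶜ = true := top_le_iff.1 hyle
      have : φ y = false := by
        rcases h : φ y with _ | _
        · rfl
        · simp [h] at this
      rw [← Bool.not_eq_true, hφ] at this
      exact this hmem
    have hZ : ∀ z ∈ Z, z ∉ ξ := by
      intro z hz hmem
      have : φ z ≤ Z.sup φ := Finset.le_sup hz
      rw [hRHS, (hφ z).2 hmem] at this
      exact (by decide : ¬ ((true : Bool) ≤ false)) this
    -- build the witness w
    obtain ⟨w₁, hw₁, hw₁le⟩ := filter_lb hfil X hX
    obtain ⟨w₂, hw₂, hw₂disj⟩ := filter_disj hfil (Y ∪ Z) (by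
      intro s hs
      rcases Finset.mem_union.1 hs with hs | hs
      · exact ultra_dichotomy hξ (hY s hs)
      · exact ultra_dichotomy hξ (hZ s hs))
    set w := w₁ ⊓ w₂ with hw
    have hwξ : w ∈ ξ := hfil.2.2.2 w₁ hw₁ w₂ hw₂
    have hwE : w ∈ eSet X Y := by
      refine ⟨fun x hx => inf_le_left.trans (hw₁le x hx), fun y hy => ?_⟩
      exact le_bot_iff.1 (le_trans (inf_le_inf_right y inf_le_right)
        (hw₂disj y (Finset.mem_union_left _ hy)).le)
    have hwne : w ≠ ⊥ := fun h => hfil.2.1 (h ▸ hwξ)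
    obtain ⟨z, hzZ, hzw⟩ := hcov.2 w hwE hwne
    apply hzw
    have : w ⊓ z = ⊥ := le_bot_iff.1 (le_trans (inf_le_inf_right z inf_le_right)
      (hw₂disj z (Finset.mem_union_right _ hzZ)).le)
    rw [inf_comm] at this
    exact this
end

section
/- Let E be a semilattice with least element 0. Within the space of characters of E (a subspace of E → Bool with the product topology, Bool discrete), the closure of the set Ê_∞ of characters φ_ξ arising from ultrafilters ξ coincides with the set Ê_tight of tight characters, i.e. closure(Ê_∞) = Ê_tight. -/
variable {E B : Type*} [SemilatticeInf E] [OrderBot E] [BooleanAlgebra B]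

/-- A character of `E`: a representation in `Bool` which is not identically `false`. -/
def IsCharacter (φ : E → Bool) : Prop :=
  IsRepresentation φ ∧ ∃ x : E, φ x = true

/-! ### Auxiliary lemmas -/

lemma bool_le_iff (a b : Bool) : a ≤ b ↔ (a = true → b = true) := by
  cases a <;> cases b <;> simp

lemma bool_not_le (a b c : Bool) : ¬ (a ⊓ b ≤ c) ↔ (a = true ∧ b = true ∧ c = false) := by
  cases a <;> cases b <;> cases c <;> simp

lemma binf_eq_true {α : Type*} (s : Finset α) (f : α → Bool) :
    s.inf f = true ↔ ∀ a ∈ s, f a = true := by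
  simpa using Finset.inf_eq_top_iff f s

lemma bsup_eq_false {α : Type*} (s : Finset α) (f : α → Bool) :
    s.sup f = false ↔ ∀ a ∈ s, f a = false := by
  simpa using Finset.sup_eq_bot_iff f s

/-- For a filter, `x ⊓ y ∈ ξ ↔ x ∈ ξ ∧ y ∈ ξ`. -/
lemma filter_inf_mem_iff {ξ : Set E} (hξ : IsFilterE ξ) (x y : E) :
    x ⊓ y ∈ ξ ↔ x ∈ ξ ∧ y ∈ ξ := by
  obtain ⟨-, -, hup, hmeet⟩ := hξ
  constructor
  · intro h; exact ⟨hup _ h _ inf_le_left, hup _ h _ inf_le_right⟩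
  · rintro ⟨hx, hy⟩; exact hmeet _ hx _ hy

/-- Ultrafilter membership criterion. -/
lemma ultra_mem_iff {ξ : Set E} (hξ : IsUltraE ξ) (x : E) :
    x ∈ ξ ↔ ∀ y ∈ ξ, x ⊓ y ≠ ⊥ := by
  obtain ⟨⟨hne, hbot, hup, hmeet⟩, hmax⟩ := hξ
  constructor
  · intro hx y hy h
    exact hbot (h ▸ hmeet _ hx _ hy)
  · intro h
    set η : Set E := {w | ∃ y ∈ ξ, x ⊓ y ≤ w} with hη
    have hξη : ξ ⊆ η := fun y hy => ⟨y, hy, inf_le_right⟩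
    have hfil : IsFilterE η := by
      refine ⟨hne.mono hξη, ?_, ?_, ?_⟩
      · rintro ⟨y, hy, hle⟩
        exact h y hy (le_bot_iff.mp hle)
      · rintro w ⟨y, hy, hle⟩ v hwv; exact ⟨y, hy, hle.trans hwv⟩
      · rintro w ⟨y1, hy1, h1⟩ v ⟨y2, hy2, h2⟩
        exact ⟨y1 ⊓ y2, hmeet _ hy1 _ hy2,
          le_inf ((inf_le_inf_left x inf_le_left).trans h1)
            ((inf_le_inf_left x inf_le_right).trans h2)⟩
    have := hmax η hfil hξη
    rw [← this]
    obtain ⟨a, ha⟩ := hne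
    exact ⟨a, ha, inf_le_left⟩

/-- Every filter extends to an ultrafilter. -/
lemma exists_ultra {ξ : Set E} (hξ : IsFilterE ξ) : ∃ η, IsUltraE η ∧ ξ ⊆ η := by
  have hzorn : ∀ c ⊆ {s : Set E | IsFilterE s}, IsChain (fun x1 x2 => x1 ⊆ x2) c →
      c.Nonempty → ∃ ub ∈ {s : Set E | IsFilterE s}, ∀ s ∈ c, s ⊆ ub := by
    intro c hc hchain hcne
    obtain ⟨s0, hs0⟩ := hcne
    refine ⟨⋃₀ c, ?_, fun s hs => Set.subset_sUnion_of_mem hs⟩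
    refine ⟨((hc hs0).1).mono (Set.subset_sUnion_of_mem hs0), ?_, ?_, ?_⟩
    · rintro ⟨s, hs, hbot⟩; exact (hc hs).2.1 hbot
    · rintro x ⟨s, hs, hx⟩ y hxy
      exact ⟨s, hs, (hc hs).2.2.1 _ hx _ hxy⟩
    · rintro x ⟨s, hs, hx⟩ y ⟨t, ht, hy⟩
      rcases hchain.total hs ht with h | h
      · exact ⟨t, ht, (hc ht).2.2.2 _ (h hx) _ hy⟩
      · exact ⟨s, hs, (hc hs).2.2.2 _ hx _ (h hy)⟩
  obtain ⟨m, hm, hmax⟩ := zorn_subset_nonempty {s : Set E | IsFilterE s} hzorn ξ hξ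
  refine ⟨m, ⟨hmax.prop, fun η hη hsub => ?_⟩, hm⟩
  exact Set.Subset.antisymm (hmax.2 hη hsub) hsub

/-- A filter contains a common lower bound for any finite subset (together with a given element). -/
lemma filter_finset_lb {ξ : Set E} (hξ : IsFilterE ξ) (X : Finset E)
    (hX : ∀ x ∈ X, x ∈ ξ) {a : E} (ha : a ∈ ξ) :
    ∃ w ∈ ξ, w ≤ a ∧ ∀ x ∈ X, w ≤ x := by
  classical
  induction X using Finset.induction with
  | empty => exact ⟨a, ha, le_rfl, by simp⟩
  | @insert x X hxX ih =>
    obtain ⟨w, hw, hwa, hwX⟩ := ih (fun y hy => hX y (Finset.mem_insert_of_mem hy))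
    refine ⟨w ⊓ x, hξ.2.2.2 _ hw _ (hX x (Finset.mem_insert_self x X)),
      inf_le_left.trans hwa, ?_⟩
    intro y hy
    rcases Finset.mem_insert.mp hy with rfl | hy
    · exact inf_le_right
    · exact inf_le_left.trans (hwX y hy)

/-- A filter contains an element disjoint from each member of a finite set of
elements each admitting a disjoint member. -/
lemma filter_finset_disj {ξ : Set E} (hξ : IsFilterE ξ) (S : Finset E)
    (h : ∀ s ∈ S, ∃ g ∈ ξ, g ⊓ s = ⊥) :
    ∃ w ∈ ξ, ∀ s ∈ S, w ⊓ s = ⊥ := by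
  classical
  induction S using Finset.induction with
  | empty => obtain ⟨a, ha⟩ := hξ.1; exact ⟨a, ha, by simp⟩
  | @insert s S hsS ih =>
    obtain ⟨w, hw, hwS⟩ := ih (fun t ht => h t (Finset.mem_insert_of_mem ht))
    obtain ⟨g, hg, hgs⟩ := h s (Finset.mem_insert_self s S)
    refine ⟨w ⊓ g, hξ.2.2.2 _ hw _ hg, ?_⟩
    intro t ht
    rcases Finset.mem_insert.mp ht with rfl | ht
    · exact le_bot_iff.mp ((inf_le_inf_right t inf_le_right).trans hgs.le)
    · exact le_bot_iff.mp ((inf_le_inf_right t inf_le_left).trans (hwS t ht).le)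

/-- A character coming from an ultrafilter is tight. -/
lemma ultra_char_tight {ξ : Set E} (hξ : IsUltraE ξ) {φ : E → Bool}
    (hφ : ∀ x : E, φ x = true ↔ x ∈ ξ) : IsTight φ := by
  intro X Y Z hcov
  rw [bool_le_iff]
  intro hL
  by_contra hsup
  have hsupf : Z.sup φ = false := by revert hsup; cases Z.sup φ <;> simp
  have hsup' : ∀ z ∈ Z, z ∉ ξ := by
    intro z hz hmem
    have h1 := (bsup_eq_false _ _).mp hsupf z hz
    simp [(hφ z).mpr hmem] at h1
  have hand : X.inf φ = true ∧ (Y.inf fun y => (φ y)ᶜ) = true := by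
    constructor <;> [skip; skip] <;>
      · have := hL
        revert this
        cases hx : X.inf φ <;> cases hy : (Y.inf fun y => (φ y)ᶜ) <;> simp
  have hXmem : ∀ x ∈ X, x ∈ ξ := fun x hx =>
    (hφ x).mp ((binf_eq_true X φ).mp hand.1 x hx)
  have hYnot : ∀ y ∈ Y, y ∉ ξ := by
    intro y hy hmem
    have := (binf_eq_true Y _).mp hand.2 y hy
    simp [(hφ y).mpr hmem] at this
  -- construct a nonzero element of eSet X Y inside ξ, disjoint from all of Z
  obtain ⟨a, ha⟩ := hξ.1.1
  obtain ⟨w1, hw1, -, hw1X⟩ := filter_finset_lb hξ.1 X hXmem ha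
  have hdisj : ∀ (S : Finset E), (∀ s ∈ S, s ∉ ξ) → ∃ g ∈ ξ, ∀ s ∈ S, g ⊓ s = ⊥ := by
    intro S hS
    refine filter_finset_disj hξ.1 S (fun s hs => ?_)
    have := (ultra_mem_iff hξ s).not.mp (hS s hs)
    push_neg at this
    obtain ⟨g, hg, hgs⟩ := this
    exact ⟨g, hg, by rwa [inf_comm]⟩
  obtain ⟨w2, hw2, hw2Y⟩ := hdisj Y hYnot
  obtain ⟨w3, hw3, hw3Z⟩ := hdisj Z hsup'
  set v := w1 ⊓ (w2 ⊓ w3) with hv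
  have hvξ : v ∈ ξ := hξ.1.2.2.2 _ hw1 _ (hξ.1.2.2.2 _ hw2 _ hw3)
  have hvE : v ∈ eSet X Y := by
    constructor
    · intro x hx; exact inf_le_left.trans (hw1X x hx)
    · intro y hy
      exact le_bot_iff.mp ((inf_le_inf_right y
        (inf_le_right.trans inf_le_left : v ≤ w2)).trans (hw2Y y hy).le)
  have hvne : v ≠ ⊥ := fun h => hξ.1.2.1 (h ▸ hvξ)
  obtain ⟨z, hz, hzv⟩ := hcov.2 v hvE hvne
  refine hzv (le_bot_iff.mp ?_)
  calc z ⊓ v ≤ z ⊓ w3 := inf_le_inf_left z (inf_le_right.trans inf_le_right)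
    _ = w3 ⊓ z := inf_comm z w3
    _ = ⊥ := hw3Z z hz

/-- The true-set of a character is a filter. -/
lemma char_filter {φ : E → Bool} (hφ : IsCharacter φ) :
    IsFilterE {x : E | φ x = true} := by
  obtain ⟨⟨hbot, hinf⟩, x0, hx0⟩ := hφ
  refine ⟨⟨x0, hx0⟩, ?_, ?_, ?_⟩
  · simp [Set.mem_setOf_eq, hbot]
  · intro x hx y hxy
    have hxy' : x ⊓ y = x := inf_eq_left.mpr hxy
    have h2 := hinf x y
    rw [hxy'] at h2
    simp only [Set.mem_setOf_eq] at hx ⊢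
    have h3 : φ x ⊓ φ y = true := by rw [← h2]; exact hx
    revert h3
    cases φ x <;> cases φ y <;> simp
  · intro x hx y hy
    simp only [Set.mem_setOf_eq] at *
    rw [hinf x y, hx, hy]; rfl

/-- The set of tight characters is closed. -/
lemma tight_closed :
    IsClosed {φ : {ψ : E → Bool // IsCharacter ψ} | IsTight φ.1} := by
  have heq : {φ : {ψ : E → Bool // IsCharacter ψ} | IsTight φ.1} =
      ⋂ (X : Finset E) (Y : Finset E) (Z : Finset E) (_ : IsCover (↑Z) (eSet X Y)),
        {φ : {ψ : E → Bool // IsCharacter ψ} |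
          (X.inf φ.1 ⊓ Y.inf fun y => (φ.1 y)ᶜ) ≤ Z.sup φ.1} := by
    ext φ
    simp only [Set.mem_setOf_eq, Set.mem_iInter, IsTight]
  rw [heq]
  refine isClosed_iInter fun X => isClosed_iInter fun Y => isClosed_iInter fun Z =>
    isClosed_iInter fun _ => ?_
  rw [← isOpen_compl_iff]
  have hcompl : {φ : {ψ : E → Bool // IsCharacter ψ} |
      (X.inf φ.1 ⊓ Y.inf fun y => (φ.1 y)ᶜ) ≤ Z.sup φ.1}ᶜ =
      (⋂ x ∈ X, {φ : {ψ : E → Bool // IsCharacter ψ} | φ.1 x = true}) ∩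
      ((⋂ y ∈ Y, {φ : {ψ : E → Bool // IsCharacter ψ} | φ.1 y = false}) ∩
       (⋂ z ∈ Z, {φ : {ψ : E → Bool // IsCharacter ψ} | φ.1 z = false})) := by
    ext φ
    simp only [Set.mem_compl_iff, Set.mem_setOf_eq, Set.mem_inter_iff, Set.mem_iInter,
      bool_not_le, binf_eq_true, bsup_eq_false]
    constructor
    · rintro ⟨h1, h2, h3⟩
      exact ⟨h1, fun y hy => by simpa using h2 y hy, h3⟩
    · rintro ⟨h1, h2, h3⟩
      exact ⟨h1, fun y hy => by simp [h2 y hy], h3⟩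
  rw [hcompl]
  have hopen : ∀ (x : E) (b : Bool),
      IsOpen {φ : {ψ : E → Bool // IsCharacter ψ} | φ.1 x = b} := by
    intro x b
    have hc : Continuous fun φ : {ψ : E → Bool // IsCharacter ψ} => φ.1 x :=
      (continuous_apply x).comp continuous_subtype_val
    exact IsOpen.preimage hc (isOpen_discrete {b})
  exact ((isOpen_biInter_finset fun x _ => hopen x true).inter
    ((isOpen_biInter_finset fun y _ => hopen y false).inter
     (isOpen_biInter_finset fun z _ => hopen z false)))

theorem closure_ultrafilter_characters_eq_tight (E : Type*) [SemilatticeInf E] [OrderBot E] :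
    closure {φ : {ψ : E → Bool // IsCharacter ψ} |
        ∃ ξ : Set E, IsUltraE ξ ∧ ∀ x : E, φ.1 x = true ↔ x ∈ ξ} =
      {φ : {ψ : E → Bool // IsCharacter ψ} | IsTight φ.1} := by
  classical
  apply le_antisymm
  · apply closure_minimal
    · rintro φ ⟨ξ, hξ, hφ⟩
      exact ultra_char_tight hξ hφ
    · exact tight_closed
  · intro φ hφtight
    rw [mem_closure_iff]
    intro U hU hφU
    -- U is induced from an open set of E → Bool
    rw [isOpen_induced_iff] at hU
    obtain ⟨V, hV, rfl⟩ := hU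
    have hφV : φ.1 ∈ V := hφU
    obtain ⟨I, u, hIu, hpi⟩ := isOpen_pi_iff.mp hV φ.1 hφV
    -- split I according to the values of φ
    set X : Finset E := I.filter (fun i => φ.1 i = true) with hX
    set Y : Finset E := I.filter (fun i => φ.1 i = false) with hY
    have hfil : IsFilterE {x : E | φ.1 x = true} := char_filter φ.2
    obtain ⟨a, ha⟩ := φ.2.2
    obtain ⟨w, hw, -, hwX⟩ := filter_finset_lb hfil X
      (fun x hx => (Finset.mem_filter.mp hx).2) (ha : a ∈ {x : E | φ.1 x = true})
    -- there is a nonzero element of eSet {w} Y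
    have hz : ∃ z ∈ eSet ({w} : Finset E) Y, z ≠ ⊥ := by
      by_contra h
      push_neg at h
      have hcov : IsCover (↑(∅ : Finset E)) (eSet ({w} : Finset E) Y) := by
        refine ⟨by simp, fun x hx hxne => absurd (h x hx) hxne⟩
      have := hφtight {w} Y ∅ hcov
      rw [Finset.sup_empty, le_bot_iff] at this
      have h1 : ({w} : Finset E).inf φ.1 = true := by
        rw [Finset.inf_singleton]; exact hw
      have h2 : (Y.inf fun y => (φ.1 y)ᶜ) = true := by
        rw [binf_eq_true]
        intro y hy
        have := (Finset.mem_filter.mp hy).2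
        simp [this]
      rw [h1, h2] at this
      simp at this
    obtain ⟨z, ⟨hzw, hzY⟩, hzne⟩ := hz
    have hzw' : z ≤ w := hzw w (Finset.mem_singleton_self w)
    -- the principal filter at z
    have hprin : IsFilterE {v : E | z ≤ v} := by
      refine ⟨⟨z, le_rfl⟩, ?_, ?_, ?_⟩
      · intro hzb; exact hzne (le_bot_iff.mp hzb)
      · intro x hx y hxy; exact le_trans hx hxy
      · intro x hx y hy; exact le_inf hx hy
    obtain ⟨η, hη, hsub⟩ := exists_ultra hprin
    -- the ultrafilter character
    set ψ : E → Bool := fun x => decide (x ∈ η) with hψ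
    have hψmem : ∀ x : E, ψ x = true ↔ x ∈ η := by
      intro x; simp [hψ]
    have hψchar : IsCharacter ψ := by
      refine ⟨⟨?_, ?_⟩, ⟨z, (hψmem z).mpr (hsub le_rfl)⟩⟩
      · show decide ((⊥ : E) ∈ η) = false
        simp [hη.1.2.1]
      · intro x y
        have := filter_inf_mem_iff hη.1 x y
        simp only [hψ]
        by_cases hx : x ∈ η <;> by_cases hy : y ∈ η <;>
          simp [hx, hy, this]
    have hagree : ∀ i ∈ I, ψ i = φ.1 i := by
      intro i hi
      cases hφi : φ.1 i with
      | true =>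
        have hiX : i ∈ X := Finset.mem_filter.mpr ⟨hi, hφi⟩
        exact (hψmem i).mpr (hη.1.2.2.1 _ (hsub le_rfl) _ (hzw'.trans (hwX i hiX)))
      | false =>
        have hiY : i ∈ Y := Finset.mem_filter.mpr ⟨hi, hφi⟩
        by_contra hcon
        have : i ∈ η := (hψmem i).mp (by revert hcon; cases ψ i <;> simp)
        have hmem : z ⊓ i ∈ η := hη.1.2.2.2 _ (hsub le_rfl) _ this
        rw [hzY i hiY] at hmem
        exact hη.1.2.1 hmem
    refine ⟨⟨ψ, hψchar⟩, ?_, η, hη, hψmem⟩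
    show ψ ∈ V
    apply hpi
    intro i hi
    rw [hagree i hi]
    exact (hIu i hi).2
end

section
/- Let ξ be an ultrafilter in the inverse semigroup with zero S and let e ∈ E(S) be an idempotent such that e * t ≠ 0 for all t ∈ ξ. Then e * t ∈ ξ for every t ∈ ξ. -/
/-- An inverse semigroup with zero: every element `s` has a unique generalized
inverse `star s`, and `0` is absorbing. -/
class InverseSemigroupWithZero (S : Type*) extends Semigroup S, Zero S, Star S where
  zero_mul : ∀ s : S, 0 * s = 0
  mul_zero : ∀ s : S, s * 0 = 0
  mul_star_mul_self : ∀ s : S, s * star s * s = s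
  star_mul_self_star : ∀ s : S, star s * s * star s = star s
  star_unique : ∀ s x : S, s * x * s = s → x * s * x = x → x = star s

variable {S : Type*} [InverseSemigroupWithZero S]

/-- The natural partial order on an inverse semigroup: `s ≤ t` iff `t * s⋆ * s = s`. -/
def natLe (s t : S) : Prop := t * star s * s = s

/-- A filter in the inverse semigroup `S` (w.r.t. the natural partial order). -/
def IsFilterS (ξ : Set S) : Prop :=
  ξ.Nonempty ∧ (0 : S) ∉ ξ ∧
    (∀ x ∈ ξ, ∀ y : S, natLe x y → y ∈ ξ) ∧
    ∀ x ∈ ξ, ∀ y ∈ ξ, ∃ z ∈ ξ, natLe z x ∧ natLe z y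

/-- An ultrafilter: a filter maximal under inclusion. -/
def IsUltraS (ξ : Set S) : Prop :=
  IsFilterS ξ ∧ ∀ η : Set S, IsFilterS η → ξ ⊆ η → η = ξ

/-- The set `Ω` of all ultrafilters in `S`. -/
def OmegaAll (S : Type*) [InverseSemigroupWithZero S] : Set (Set S) := {ξ | IsUltraS ξ}

/-- `Ω_e`: the set of ultrafilters `ξ` with `eξ ⊆ ξ`. -/
def OmegaE (e : S) : Set (Set S) := {ξ | IsUltraS ξ ∧ ∀ t ∈ ξ, e * t ∈ ξ}

/-- The map `λₛ` on filters. -/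
def lambdaMap (s : S) (ξ : Set S) : Set S := {u | ∃ t ∈ ξ, natLe (s * t) u}

/-- `y` is dense in `x` (for idempotents `y ≤ x`): there is no nonzero idempotent
`z ≤ x` with `z * y = 0`. -/
def DenseIn (y x : S) : Prop :=
  ∀ z : S, IsIdempotentElem z → z * x = z → z * y = 0 → z = 0

/-- `s` essentially coincides with `t`. -/
def EssEq (s t : S) : Prop :=
  star s * s = star t * t ∧
    ∀ f : S, IsIdempotentElem f → f ≠ 0 → f * (star s * s) = f →
      ∃ e : S, IsIdempotentElem e ∧ e ≠ 0 ∧ e * f = e ∧ s * e = t * e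

section Aux
open InverseSemigroupWithZero

lemma my_sms (s : S) : s * star s * s = s := mul_star_mul_self s
lemma my_sss (s : S) : star s * s * star s = star s := star_mul_self_star s

lemma my_star_star (s : S) : star (star s) = s :=
  (star_unique (star s) s (my_sss s) (my_sms s)).symm

lemma my_idem_star {e : S} (he : IsIdempotentElem e) : star e = e :=
  (star_unique e e (by rw [he, he]) (by rw [he, he])).symm

lemma my_idem_star_mul (s : S) : IsIdempotentElem (star s * s) := by
  show star s * s * (star s * s) = star s * s
  rw [mul_assoc, ← mul_assoc s, my_sms]

lemma my_idem_mul_star (s : S) : IsIdempotentElem (s * star s) := by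
  show s * star s * (s * star s) = s * star s
  rw [mul_assoc, ← mul_assoc (star s), my_sss]

/-- Idempotents commute. -/
lemma my_idem_comm {e f : S} (he : IsIdempotentElem e) (hf : IsIdempotentElem f) :
    e * f = f * e := by
  have hx1 : (e * f) * star (e * f) * (e * f) = e * f := my_sms (e * f)
  have hx2 : star (e * f) * (e * f) * star (e * f) = star (e * f) := my_sss (e * f)
  have key1 : (e * f) * (f * star (e * f) * e) * (e * f) = e * f := by
    have h : (e * f) * (f * star (e * f) * e) * (e * f)
        = (e * f) * star (e * f) * (e * f) := by
      simp only [mul_assoc]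
      rw [← mul_assoc f f, hf, ← mul_assoc e e, he]
    rw [h, hx1]
  have key2 : (f * star (e * f) * e) * (e * f) * (f * star (e * f) * e)
      = f * star (e * f) * e := by
    have h : (f * star (e * f) * e) * (e * f) * (f * star (e * f) * e)
        = f * (star (e * f) * (e * f) * star (e * f)) * e := by
      simp only [mul_assoc]
      rw [← mul_assoc e e, he, ← mul_assoc f f, hf]
    rw [h, hx2]
  have hxe : f * star (e * f) * e = star (e * f) :=
    star_unique (e * f) (f * star (e * f) * e) key1 key2
  have hxidem : IsIdempotentElem (star (e * f)) := by
    show star (e * f) * star (e * f) = star (e * f)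
    calc star (e * f) * star (e * f)
        = (f * star (e * f) * e) * (f * star (e * f) * e) := by rw [hxe]
      _ = f * (star (e * f) * (e * f) * star (e * f)) * e := by simp only [mul_assoc]
      _ = f * star (e * f) * e := by rw [hx2]
      _ = star (e * f) := hxe
  have hefx : e * f = star (e * f) :=
    (my_star_star (e * f)).symm.trans (my_idem_star hxidem)
  have hef : IsIdempotentElem (e * f) := by rw [hefx]; exact hxidem
  have hy1 : (f * e) * star (f * e) * (f * e) = f * e := my_sms (f * e)
  have hy2 : star (f * e) * (f * e) * star (f * e) = star (f * e) := my_sss (f * e)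
  have key1' : (f * e) * (e * star (f * e) * f) * (f * e) = f * e := by
    have h : (f * e) * (e * star (f * e) * f) * (f * e)
        = (f * e) * star (f * e) * (f * e) := by
      simp only [mul_assoc]
      rw [← mul_assoc e e, he, ← mul_assoc f f, hf]
    rw [h, hy1]
  have key2' : (e * star (f * e) * f) * (f * e) * (e * star (f * e) * f)
      = e * star (f * e) * f := by
    have h : (e * star (f * e) * f) * (f * e) * (e * star (f * e) * f)
        = e * (star (f * e) * (f * e) * star (f * e)) * f := by
      simp only [mul_assoc]
      rw [← mul_assoc f f, hf, ← mul_assoc e e, he]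
    rw [h, hy2]
  have hye : e * star (f * e) * f = star (f * e) :=
    star_unique (f * e) (e * star (f * e) * f) key1' key2'
  have hyidem : IsIdempotentElem (star (f * e)) := by
    show star (f * e) * star (f * e) = star (f * e)
    calc star (f * e) * star (f * e)
        = (e * star (f * e) * f) * (e * star (f * e) * f) := by rw [hye]
      _ = e * (star (f * e) * (f * e) * star (f * e)) * f := by simp only [mul_assoc]
      _ = e * star (f * e) * f := by rw [hy2]
      _ = star (f * e) := hye
  have hfex : f * e = star (f * e) :=
    (my_star_star (f * e)).symm.trans (my_idem_star hyidem)
  have hfe : IsIdempotentElem (f * e) := by rw [hfex]; exact hyidem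
  have k1 : (e * f) * (f * e) * (e * f) = e * f := by
    have h : (e * f) * (f * e) * (e * f) = (e * f) * (e * f) := by
      simp only [mul_assoc]
      rw [← mul_assoc f f, hf, ← mul_assoc e e, he]
    rw [h, hef]
  have k2 : (f * e) * (e * f) * (f * e) = f * e := by
    have h : (f * e) * (e * f) * (f * e) = (f * e) * (f * e) := by
      simp only [mul_assoc]
      rw [← mul_assoc e e, he, ← mul_assoc f f, hf]
    rw [h, hfe]
  have : f * e = star (e * f) := star_unique (e * f) (f * e) k1 k2
  rw [← hefx] at this
  exact this.symm

lemma my_star_mul (s t : S) : star (s * t) = star t * star s := by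
  have hc := my_idem_comm (my_idem_star_mul s) (my_idem_mul_star t)
  refine (star_unique (s * t) (star t * star s) ?_ ?_).symm
  · calc s * t * (star t * star s) * (s * t)
        = s * (t * star t * (star s * s)) * t := by simp only [mul_assoc]
      _ = s * (star s * s * (t * star t)) * t := by
          rw [show t * star t * (star s * s) = star s * s * (t * star t) from hc.symm]
      _ = (s * star s * s) * (t * star t * t) := by simp only [mul_assoc]
      _ = s * t := by rw [my_sms, my_sms]
  · calc star t * star s * (s * t) * (star t * star s)
        = star t * (star s * s * (t * star t)) * star s := by simp only [mul_assoc]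
      _ = star t * (t * star t * (star s * s)) * star s := by rw [hc]
      _ = (star t * t * star t) * (star s * s * star s) := by simp only [mul_assoc]
      _ = star t * star s := by rw [my_sss, my_sss]

lemma natLe_refl (s : S) : natLe s s := my_sms s

lemma natLe_of_idem_mul_right {t g : S} (hg : IsIdempotentElem g) :
    natLe (t * g) t := by
  show t * star (t * g) * (t * g) = t * g
  rw [my_star_mul, my_idem_star hg]
  calc t * (g * star t) * (t * g)
      = t * (g * (star t * t) * g) := by simp only [mul_assoc]
    _ = t * (star t * t * g * g) := by
        rw [my_idem_comm hg (my_idem_star_mul t)]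
    _ = t * star t * t * (g * g) := by simp only [mul_assoc]
    _ = t * g := by rw [my_sms, hg]

lemma natLe_of_idem_mul_left {t f : S} (hf : IsIdempotentElem f) :
    natLe (f * t) t := by
  show t * star (f * t) * (f * t) = f * t
  rw [my_star_mul, my_idem_star hf]
  calc t * (star t * f) * (f * t)
      = t * star t * (f * f) * t := by simp only [mul_assoc]
    _ = t * star t * f * t := by rw [hf]
    _ = f * (t * star t) * t := by rw [my_idem_comm (my_idem_mul_star t) hf]
    _ = f * t := by rw [mul_assoc, my_sms]

lemma natLe_eq_mul {s t : S} (h : natLe s t) : s = t * (star s * s) := by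
  rw [← mul_assoc]; exact h.symm

lemma my_idem_mul {a b : S} (ha : IsIdempotentElem a) (hb : IsIdempotentElem b) :
    IsIdempotentElem (a * b) := by
  show a * b * (a * b) = a * b
  rw [mul_assoc, ← mul_assoc b, ← my_idem_comm ha hb, mul_assoc, hb, ← mul_assoc, ha]

lemma natLe_trans {s t u : S} (h1 : natLe s t) (h2 : natLe t u) : natLe s u := by
  have hs : s = u * (star t * t * (star s * s)) := by
    rw [← mul_assoc, ← natLe_eq_mul h2]; exact (natLe_eq_mul h1)
  rw [hs]
  exact natLe_of_idem_mul_right (my_idem_mul (my_idem_star_mul t) (my_idem_star_mul s))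

lemma natLe_mul_left {z t : S} (u : S) (h : natLe z t) : natLe (u * z) (u * t) := by
  have : u * z = u * t * (star z * z) := by
    rw [mul_assoc, ← natLe_eq_mul h]
  rw [this]
  exact natLe_of_idem_mul_right (my_idem_star_mul z)

lemma natLe_zero {s : S} (h : natLe s 0) : s = 0 := by
  have : (0 : S) * star s * s = s := h
  rw [InverseSemigroupWithZero.zero_mul, InverseSemigroupWithZero.zero_mul] at this
  exact this.symm

end Aux

theorem mem_ultrafilter_of_ne_zero (ξ : Set S) (hξ : IsUltraS ξ)
    (e : S) (he : IsIdempotentElem e) (h : ∀ t ∈ ξ, e * t ≠ 0) :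
    ∀ t ∈ ξ, e * t ∈ ξ := by
  obtain ⟨⟨hne, h0, hup, hdir⟩, hmax⟩ := hξ
  set η : Set S := lambdaMap e ξ with hη
  have hηfil : IsFilterS η := by
    refine ⟨?_, ?_, ?_, ?_⟩
    · obtain ⟨t0, ht0⟩ := hne
      exact ⟨e * t0, ⟨t0, ht0, natLe_refl _⟩⟩
    · rintro ⟨t, ht, hle⟩
      exact h t ht (natLe_zero hle)
    · rintro x ⟨t, ht, hle⟩ y hxy
      exact ⟨t, ht, natLe_trans hle hxy⟩
    · rintro x ⟨t1, ht1, hl1⟩ y ⟨t2, ht2, hl2⟩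
      obtain ⟨z, hz, hz1, hz2⟩ := hdir t1 ht1 t2 ht2
      refine ⟨e * z, ⟨z, hz, natLe_refl _⟩, ?_, ?_⟩
      · exact natLe_trans (natLe_mul_left e hz1) hl1
      · exact natLe_trans (natLe_mul_left e hz2) hl2
  have hsub : ξ ⊆ η := fun t ht => ⟨t, ht, natLe_of_idem_mul_left he⟩
  have heq : η = ξ := hmax η hηfil hsub
  intro t ht
  rw [← heq]
  exact ⟨t, ht, natLe_refl _⟩
end

section
/- Let e and f be idempotents in the inverse semigroup with zero S. Then Ω_e = Ω_f if and only if the idempotent e*f is dense in e and dense in f. -/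
variable {S : Type*} [InverseSemigroupWithZero S]

namespace ISWZaux

lemma zmul (s : S) : (0:S) * s = 0 := InverseSemigroupWithZero.zero_mul s
lemma mulz (s : S) : s * (0:S) = 0 := InverseSemigroupWithZero.mul_zero s
lemma sms (s : S) : s * star s * s = s := InverseSemigroupWithZero.mul_star_mul_self s
lemma smss (s : S) : star s * s * star s = star s := InverseSemigroupWithZero.star_mul_self_star s
lemma star_unique {s x : S} (h1 : s * x * s = s) (h2 : x * s * x = x) : x = star s :=
  InverseSemigroupWithZero.star_unique s x h1 h2

lemma star_idem {e : S} (he : IsIdempotentElem e) : star e = e :=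
  (star_unique (by rw [he, he]) (by rw [he, he])).symm

lemma ia {e : S} (he : IsIdempotentElem e) (t : S) : e * (e * t) = e * t := by
  rw [← mul_assoc, he]

lemma idem_mul_idem {e f : S} (he : IsIdempotentElem e) (hf : IsIdempotentElem f) :
    IsIdempotentElem (e * f) := by
  set x := star (e * f) with hx
  have key : x * (e * (f * x)) = x := by
    have := smss (e * f); simp only [mul_assoc] at this; exact this
  have h1 : (e * f) * (f * x * e) * (e * f) = e * f := by
    have := sms (e * f)
    simp only [mul_assoc] at this ⊢
    rw [ia hf, ia he]; exact this
  have h2 : (f * x * e) * (e * f) * (f * x * e) = f * x * e := by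
    simp only [mul_assoc]
    rw [ia he, ia hf]
    have h3 : x * (e * (f * (x * e))) = x * e := by
      calc x * (e * (f * (x * e))) = x * (e * (f * x)) * e := by simp only [mul_assoc]
        _ = x * e := by rw [key]
    rw [h3]
  have hxe' : f * x * e = x := star_unique h1 h2
  have hxx : IsIdempotentElem x := by
    show x * x = x
    calc x * x = (f * x * e) * (f * x * e) := by rw [hxe']
      _ = f * (x * (e * (f * (x * e)))) := by simp only [mul_assoc]
      _ = f * (x * (e * (f * x)) * e) := by simp only [mul_assoc]
      _ = f * (x * e) := by rw [key]
      _ = f * x * e := by rw [mul_assoc]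
      _ = x := hxe'
  have hefx : e * f = x := by
    have h3 : x * (e * f) * x = x := by
      calc x * (e * f) * x = x * (e * (f * x)) := by simp only [mul_assoc]
        _ = x := key
    have := star_unique h3 (sms (e * f))
    rwa [star_idem hxx] at this
  rw [hefx]; exact hxx

lemma idem_comm {e f : S} (he : IsIdempotentElem e) (hf : IsIdempotentElem f) :
    e * f = f * e := by
  have hef := idem_mul_idem he hf
  have hfe := idem_mul_idem hf he
  have h1 : (e * f) * (f * e) * (e * f) = e * f := by
    have h := hef
    simp only [IsIdempotentElem] at h
    simp only [mul_assoc] at h ⊢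
    rw [ia hf, ia he]; exact h
  have h2 : (f * e) * (e * f) * (f * e) = f * e := by
    have h := hfe
    simp only [IsIdempotentElem] at h
    simp only [mul_assoc] at h ⊢
    rw [ia he, ia hf]; exact h
  have := star_unique h1 h2
  rw [star_idem hef] at this
  exact this.symm

lemma sst (s : S) : IsIdempotentElem (star s * s) := by
  show star s * s * (star s * s) = star s * s
  have h := sms s
  simp only [mul_assoc] at h ⊢
  rw [h]

lemma tts (s : S) : IsIdempotentElem (s * star s) := by
  show s * star s * (s * star s) = s * star s
  have h := smss s
  simp only [mul_assoc] at h ⊢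
  rw [h]

lemma star_mul (s t : S) : star (s * t) = star t * star s := by
  have hs := sms s
  have ht := sms t
  have hs' := smss s
  have ht' := smss t
  have h1 : (s * t) * (star t * star s) * (s * t) = s * t := by
    calc (s * t) * (star t * star s) * (s * t)
        = s * ((t * star t) * ((star s * s) * t)) := by simp only [mul_assoc]
      _ = s * ((t * star t) * (star s * s) * t) := by simp only [mul_assoc]
      _ = s * ((star s * s) * (t * star t) * t) := by rw [idem_comm (tts t) (sst s)]
      _ = s * (star s * s) * (t * (star t * t)) := by simp only [mul_assoc]
      _ = s * (star s * s) * t := by rw [← mul_assoc t, ht]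
      _ = s * t := by rw [← mul_assoc s, hs]
  have h2 : (star t * star s) * (s * t) * (star t * star s) = star t * star s := by
    calc (star t * star s) * (s * t) * (star t * star s)
        = star t * ((star s * s) * ((t * star t) * star s)) := by simp only [mul_assoc]
      _ = star t * ((star s * s) * (t * star t) * star s) := by simp only [mul_assoc]
      _ = star t * ((t * star t) * (star s * s) * star s) := by rw [idem_comm (sst s) (tts t)]
      _ = star t * (t * star t) * (star s * s * star s) := by simp only [mul_assoc]
      _ = star t * (t * star t) * star s := by rw [hs']
      _ = star t * star s := by rw [← mul_assoc (star t), ht']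
  exact (star_unique h1 h2).symm

lemma natLe_refl (s : S) : natLe s s := sms s

lemma natLe_zero {s : S} (h : natLe s 0) : s = 0 := by
  unfold natLe at h
  rw [zmul, zmul] at h
  exact h.symm

lemma natLe_iff {s t : S} : natLe s t ↔ t * (star s * s) = s := by
  unfold natLe; rw [mul_assoc]

lemma mul_right_idem {g : S} (hg : IsIdempotentElem g) (x : S) : natLe (x * g) x := by
  show x * star (x * g) * (x * g) = x * g
  rw [star_mul, star_idem hg]
  calc x * (g * star x) * (x * g)
      = x * (g * (star x * x) * g) := by simp only [mul_assoc]
    _ = x * ((star x * x) * g * g) := by rw [idem_comm hg (sst x)]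
    _ = x * (star x * x) * (g * g) := by simp only [mul_assoc]
    _ = x * (star x * x) * g := by rw [hg]
    _ = x * g := by rw [← mul_assoc x, sms]

lemma mul_left_idem {g : S} (hg : IsIdempotentElem g) (x : S) : natLe (g * x) x := by
  show x * star (g * x) * (g * x) = g * x
  rw [star_mul, star_idem hg]
  calc x * (star x * g) * (g * x)
      = (x * star x) * (g * (g * x)) := by simp only [mul_assoc]
    _ = (x * star x) * (g * x) := by rw [ia hg]
    _ = (x * star x) * g * x := (mul_assoc _ _ _).symm
    _ = g * (x * star x) * x := by rw [idem_comm (tts x) hg]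
    _ = g * (x * star x * x) := by simp only [mul_assoc]
    _ = g * x := by rw [sms]

lemma natLe_trans {s t u : S} (h1 : natLe s t) (h2 : natLe t u) : natLe s u := by
  rw [natLe_iff] at h1 h2
  have hs : s = u * ((star t * t) * (star s * s)) := by
    rw [← mul_assoc, h2, h1]
  rw [show s = u * ((star t * t) * (star s * s)) from hs]
  exact mul_right_idem (idem_mul_idem (sst t) (sst s)) u

lemma natLe_mul_left_mono {s t : S} (a : S) (h : natLe s t) : natLe (a * s) (a * t) := by
  rw [natLe_iff] at h
  have : a * s = (a * t) * (star s * s) := by rw [mul_assoc, h]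
  rw [this]
  exact mul_right_idem (sst s) (a * t)



/-- any ultrafilter whose members all have nonzero product with `e` lies in `Ω_e`. -/
lemma mem_omegaE_of_ne_zero {e : S} {ξ : Set S} (he : IsIdempotentElem e)
    (hξ : IsUltraS ξ) (h : ∀ t ∈ ξ, e * t ≠ 0) : ξ ∈ OmegaE e := by
  refine ⟨hξ, ?_⟩
  set η : Set S := {u | ∃ t ∈ ξ, natLe (e * t) u} with hη
  have hsub : ξ ⊆ η := fun t ht => ⟨t, ht, mul_left_idem he t⟩
  obtain ⟨⟨t₀, ht₀⟩, h0ξ, hup, hdir⟩ := hξ.1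
  have hfil : IsFilterS η := by
    refine ⟨⟨e * t₀, t₀, ht₀, natLe_refl _⟩, ?_, ?_, ?_⟩
    · rintro ⟨t, ht, hle⟩
      exact h t ht (natLe_zero hle)
    · rintro u ⟨t, ht, hle⟩ v huv
      exact ⟨t, ht, natLe_trans hle huv⟩
    · rintro u ⟨t₁, ht₁, hle₁⟩ v ⟨t₂, ht₂, hle₂⟩
      obtain ⟨t, ht, hlt₁, hlt₂⟩ := hdir t₁ ht₁ t₂ ht₂
      refine ⟨e * t, ⟨t, ht, natLe_refl _⟩, ?_, ?_⟩
      · exact natLe_trans (natLe_mul_left_mono e hlt₁) hle₁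
      · exact natLe_trans (natLe_mul_left_mono e hlt₂) hle₂
  have heq : η = ξ := hξ.2 η hfil hsub
  intro t ht
  rw [← heq]
  exact ⟨t, ht, natLe_refl _⟩

/-- conversely, members of ultrafilters in `Ω_e` have nonzero product with `e`. -/
lemma ne_zero_of_mem_omegaE {e : S} {ξ : Set S}
    (hξ : ξ ∈ OmegaE e) : ∀ t ∈ ξ, e * t ≠ 0 := by
  intro t ht h0
  exact hξ.1.1.2.1 (h0 ▸ hξ.2 t ht)

/-- Every nonzero element lies in some ultrafilter. -/
lemma exists_ultra {s : S} (hs : s ≠ 0) : ∃ ξ : Set S, IsUltraS ξ ∧ s ∈ ξ := by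
  set P : Set S := {u | natLe s u} with hP
  have hPfil : IsFilterS P := by
    refine ⟨⟨s, natLe_refl s⟩, ?_, ?_, ?_⟩
    · intro h0; exact hs (natLe_zero h0)
    · intro x hx y hxy; exact natLe_trans hx hxy
    · intro x hx y hy; exact ⟨s, natLe_refl s, hx, hy⟩
  have H : ∀ c ⊆ {η : Set S | IsFilterS η}, IsChain (· ⊆ ·) c → c.Nonempty →
      ∃ ub ∈ {η : Set S | IsFilterS η}, ∀ t ∈ c, t ⊆ ub := by
    rintro c hcS hchain ⟨η₀, hη₀⟩
    refine ⟨⋃₀ c, ?_, fun η hη => Set.subset_sUnion_of_mem hη⟩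
    obtain ⟨⟨x₀, hx₀⟩, -, -, -⟩ := hcS hη₀
    refine ⟨⟨x₀, η₀, hη₀, hx₀⟩, ?_, ?_, ?_⟩
    · rintro ⟨η, hη, h0⟩
      exact (hcS hη).2.1 h0
    · rintro x ⟨η, hη, hx⟩ y hxy
      exact ⟨η, hη, (hcS hη).2.2.1 x hx y hxy⟩
    · rintro x ⟨η₁, hη₁, hx⟩ y ⟨η₂, hη₂, hy⟩
      rcases hchain.total hη₁ hη₂ with hle | hle
      · obtain ⟨z, hz, h1, h2⟩ := (hcS hη₂).2.2.2 x (hle hx) y hy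
        exact ⟨z, ⟨η₂, hη₂, hz⟩, h1, h2⟩
      · obtain ⟨z, hz, h1, h2⟩ := (hcS hη₁).2.2.2 x hx y (hle hy)
        exact ⟨z, ⟨η₁, hη₁, hz⟩, h1, h2⟩
  obtain ⟨m, hPm, hm⟩ := zorn_subset_nonempty {η : Set S | IsFilterS η} H P hPfil
  exact ⟨m, ⟨hm.1, fun η hη hmη => subset_antisymm (hm.2 hη hmη) hmη⟩, hPm (natLe_refl s)⟩

/-- Key inclusion: if `e*f` is dense in `e`, then `Ω_e ⊆ Ω_f`. -/
lemma omega_subset {e f : S} (he : IsIdempotentElem e) (hf : IsIdempotentElem f)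
    (hd : DenseIn (e * f) e) : OmegaE e ⊆ OmegaE f := by
  intro ξ hξe
  have hξ : IsUltraS ξ := hξe.1
  apply mem_omegaE_of_ne_zero hf hξ
  intro t ht h0
  set g : S := t * star t with hg
  have hgi : IsIdempotentElem g := tts t
  set z : S := e * g with hz
  have hzi : IsIdempotentElem z := idem_mul_idem he hgi
  have hze : z * e = z := by
    show e * g * e = e * g
    calc e * g * e = e * (g * e) := by rw [mul_assoc]
      _ = e * (e * g) := by rw [idem_comm hgi he]
      _ = e * g := ia he g
  have hzef : z * (e * f) = 0 := by
    show e * g * (e * f) = 0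
    calc e * g * (e * f) = e * (g * e * f) := by simp only [mul_assoc]
      _ = e * (e * g * f) := by rw [idem_comm hgi he]
      _ = e * (e * (g * f)) := by rw [mul_assoc]
      _ = e * (e * (f * g)) := by rw [idem_comm hgi hf]
      _ = e * (f * g) := ia he _
      _ = e * (f * (t * star t)) := by rw [hg]
      _ = e * (f * t * star t) := by rw [mul_assoc]
      _ = e * (0 * star t) := by rw [h0]
      _ = e * 0 := by rw [zmul]
      _ = 0 := mulz e
  have hzet : z * (e * t) = e * t := by
    show e * g * (e * t) = e * t
    calc e * g * (e * t) = e * (g * e * t) := by simp only [mul_assoc]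
      _ = e * (e * g * t) := by rw [idem_comm hgi he]
      _ = e * (e * (g * t)) := by rw [mul_assoc]
      _ = e * (g * t) := ia he _
      _ = e * (t * star t * t) := by rw [hg, mul_assoc]
      _ = e * t := by rw [sms]
  have hz0 : z ≠ 0 := by
    intro hz0
    have : e * t = 0 := by rw [← hzet, hz0, zmul]
    exact ne_zero_of_mem_omegaE hξe t ht this
  exact hz0 (hd z hzi hze hzef)

/-- Key density: if `Ω_e ⊆ Ω_f`, then `e*f` is dense in `e`. -/
lemma dense_of_omega_subset {e f : S} (he : IsIdempotentElem e) (hf : IsIdempotentElem f)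
    (h : OmegaE e ⊆ OmegaE f) : DenseIn (e * f) e := by
  intro z hz hze hzef
  by_contra hz0
  obtain ⟨ξ, hξ, hzξ⟩ := exists_ultra hz0
  have hξe : ξ ∈ OmegaE e := by
    apply mem_omegaE_of_ne_zero he hξ
    intro t ht h0
    obtain ⟨w, hw, hwt, hwz⟩ := hξ.1.2.2.2 t ht z hzξ
    rw [natLe_iff] at hwt hwz
    have hez : e * z = z := by rw [idem_comm he hz]; exact hze
    have hew : e * w = w := by
      calc e * w = e * (z * (star w * w)) := by rw [hwz]
        _ = e * z * (star w * w) := by rw [mul_assoc]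
        _ = z * (star w * w) := by rw [hez]
        _ = w := hwz
    have hw0 : w = 0 := by
      calc w = e * w := hew.symm
        _ = e * (t * (star w * w)) := by rw [hwt]
        _ = e * t * (star w * w) := by rw [mul_assoc]
        _ = 0 * (star w * w) := by rw [h0]
        _ = 0 := zmul _
    exact hξ.1.2.1 (hw0 ▸ hw)
  have hξf : ξ ∈ OmegaE f := h hξe
  have hfz : f * z = 0 := by
    rw [idem_comm hf hz, ← hze, mul_assoc]
    exact hzef
  exact ne_zero_of_mem_omegaE hξf z hzξ hfz

end ISWZaux

open ISWZaux in
theorem omegaE_eq_iff_dense (e f : S) (he : IsIdempotentElem e) (hf : IsIdempotentElem f) :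
    OmegaE e = OmegaE f ↔ DenseIn (e * f) e ∧ DenseIn (e * f) f := by
  constructor
  · intro h
    constructor
    · exact dense_of_omega_subset he hf h.le
    · have : DenseIn (f * e) f := dense_of_omega_subset hf he h.ge
      rwa [idem_comm hf he] at this
  · rintro ⟨hde, hdf⟩
    apply subset_antisymm
    · exact omega_subset he hf hde
    · have : DenseIn (f * e) f := by rwa [idem_comm hf he]
      exact omega_subset hf he this
end
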